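/- Let (x, x₁) be a Mannheim D-pair of type 1 in Minkowski 3-space with g = n₁ at corresponding points, T₁ = cosh θ·T - sinh θ·n, g₁ = -sinh θ·T + cosh θ·n. Then differentiating the orthogonality ⟨n, n₁⟩ = 0 with respect to s₁ gives τ_g·(ds/ds₁) = -k_{n₁}·sinh θ + τ_{g₁}·cosh θ. -/

import Mathlib

noncomputable section

open Real

/-- Minkowski inner product on ℝ³: ⟨u,v⟩ = -u₁v₁ + u₂v₂ + u₃v₃. -/
def mink (u v : Fin 3 → ℝ) : ℝ := -(u 0 * v 0) + u 1 * v 1 + u 2 * v 2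

/-- Lorentzian cross product on Minkowski 3-space. -/
def lcross (u v : Fin 3 → ℝ) : Fin 3 → ℝ :=
  ![u 1 * v 2 - u 2 * v 1, u 0 * v 2 - u 2 * v 0, u 1 * v 0 - u 0 * v 1]

/-!
Differentiate the constant ⟨n, n₁⟩ = 0 by the product rule, so that
⟨n', n₁⟩ + ⟨n, n₁'⟩ = 0. Since n₁ = g, the first term is σ τ_g by orthonormality of (T, g, n).
Expanding T₁ and g₁ in T and n, ⟨n, T₁⟩ = sinh θ and ⟨n, g₁⟩ = -cosh θ because ⟨n, n⟩ = -1,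
so the second term is k_{n₁} sinh θ - τ_{g₁} cosh θ.
-/

section Bilinear

variable (u v w : Fin 3 → ℝ) (a : ℝ)

theorem mink_comm : mink u v = mink v u := by
  simp only [mink]; ring

theorem mink_add_left : mink (u + v) w = mink u w + mink v w := by
  simp only [mink, Pi.add_apply]; ring

theorem mink_add_right : mink u (v + w) = mink u v + mink u w := by
  simp only [mink, Pi.add_apply]; ring

theorem mink_sub_right : mink u (v - w) = mink u v - mink u w := by
  simp only [mink, Pi.sub_apply]; ring

theorem mink_smul_left : mink (a • u) v = a * mink u v := by
  simp only [mink, Pi.smul_apply, smul_eq_mul]; ring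

theorem mink_smul_right : mink u (a • v) = a * mink u v := by
  simp only [mink, Pi.smul_apply, smul_eq_mul]; ring

end Bilinear

theorem HasDerivAt.mink {u v : ℝ → Fin 3 → ℝ} {u' v' : Fin 3 → ℝ} {t : ℝ}
    (hu : HasDerivAt u u' t) (hv : HasDerivAt v v' t) :
    HasDerivAt (fun t => mink (u t) (v t)) (mink u' (v t) + mink (u t) v') t := by
  have hui := hasDerivAt_pi.mp hu
  have hvi := hasDerivAt_pi.mp hv
  unfold _root_.mink
  exact ((((hui 0).mul (hvi 0)).neg.add ((hui 1).mul (hvi 1))).add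
    ((hui 2).mul (hvi 2))).congr_deriv (by ring)

theorem mink_deriv_add_eq_zero_of_mink_const {u v : ℝ → Fin 3 → ℝ} {u' v' : Fin 3 → ℝ}
    {t c : ℝ} (h : ∀ t, mink (u t) (v t) = c)
    (hu : HasDerivAt u u' t) (hv : HasDerivAt v v' t) :
    mink u' (v t) + mink (u t) v' = 0 := by
  have hconst : (fun t => mink (u t) (v t)) = fun _ => c := funext h
  exact (hu.mink hv).unique (hconst ▸ hasDerivAt_const t c)

theorem mannheim_type1_tg_relation_general
    (T T₁ g g₁ n n₁ : ℝ → Fin 3 → ℝ)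
    (kn τg kn₁ τg₁ σ θ : ℝ → ℝ)
    (hT₁ : ∀ s, T₁ s = Real.cosh (θ s) • T s - Real.sinh (θ s) • n s)
    (hg₁ : ∀ s, g₁ s = (-Real.sinh (θ s)) • T s + Real.cosh (θ s) • n s)
    (hgn₁ : ∀ s, g s = n₁ s)
    (hnn₁ : ∀ s, mink (n s) (n₁ s) = 0)
    (hnd : ∀ s, HasDerivAt n (σ s • (kn s • T s + τg s • g s)) s)
    (hn₁d : ∀ s, HasDerivAt n₁ (kn₁ s • T₁ s + τg₁ s • g₁ s) s)
    (h2 : ∀ s, mink (g s) (g s) = 1)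
    (h3 : ∀ s, mink (n s) (n s) = -1)
    (h4 : ∀ s, mink (T s) (g s) = 0) (h5 : ∀ s, mink (T s) (n s) = 0) :
    ∀ s, τg s * σ s = -(kn₁ s) * Real.sinh (θ s) + τg₁ s * Real.cosh (θ s) := by
  intro s
  have hsum := mink_deriv_add_eq_zero_of_mink_const hnn₁ (hnd s) (hn₁d s)
  rw [hT₁, hg₁, ← hgn₁] at hsum
  simp only [mink_add_left, mink_add_right, mink_sub_right, mink_smul_left, mink_smul_right,
    mink_comm (n s) (T s), h2, h3, h4, h5] at hsum
  linear_combination hsum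

/-- Theorem 4.3 (ii): differentiating ⟨n,n₁⟩ = 0 gives
τ_g·(ds/ds₁) = -k_{n₁}·sinh θ + τ_{g₁}·cosh θ.  Everything is a function of s₁. -/
theorem mannheim_type1_tg_relation
    (T T₁ g g₁ n n₁ : ℝ → Fin 3 → ℝ)
    (kg kn τg kg₁ kn₁ τg₁ σ θ : ℝ → ℝ)
    (hT₁ : ∀ s, T₁ s = Real.cosh (θ s) • T s - Real.sinh (θ s) • n s)
    (hg₁ : ∀ s, g₁ s = (-Real.sinh (θ s)) • T s + Real.cosh (θ s) • n s)
    (hgn₁ : ∀ s, g s = n₁ s)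
    (hnn₁ : ∀ s, mink (n s) (n₁ s) = 0)
    (hnd : ∀ s, HasDerivAt n (σ s • (kn s • T s + τg s • g s)) s)
    (hn₁d : ∀ s, HasDerivAt n₁ (kn₁ s • T₁ s + τg₁ s • g₁ s) s)
    (h1 : ∀ s, mink (T s) (T s) = 1) (h2 : ∀ s, mink (g s) (g s) = 1)
    (h3 : ∀ s, mink (n s) (n s) = -1)
    (h4 : ∀ s, mink (T s) (g s) = 0) (h5 : ∀ s, mink (T s) (n s) = 0)
    (h6 : ∀ s, mink (g s) (n s) = 0)
    (h7 : ∀ s, mink (T₁ s) (T₁ s) = 1) (h8 : ∀ s, mink (g₁ s) (g₁ s) = -1)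
    (h9 : ∀ s, mink (n₁ s) (n₁ s) = 1)
    (h10 : ∀ s, mink (T₁ s) (g₁ s) = 0) (h11 : ∀ s, mink (T₁ s) (n₁ s) = 0)
    (h12 : ∀ s, mink (g₁ s) (n₁ s) = 0) :
    ∀ s, τg s * σ s = -(kn₁ s) * Real.sinh (θ s) + τg₁ s * Real.cosh (θ s) :=
  mannheim_type1_tg_relation_general T T₁ g g₁ n n₁ kn τg kn₁ τg₁ σ θ hT₁ hg₁ hgn₁ hnn₁ hnd hn₁d h2
    h3 h4 h5
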